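/- arXiv:2401.16377 — 2 statements merged into one kernel-verified Lean document; each statement's English description precedes it below -/
import Mathlib

section
/- With the polynomials p_k defined by p_0(t)=1, p_k(0)=0 and p_k'(t)=∑_{j=0}^{k-1} C(2k,2j) p_j(t), write p_k(t)=∑_{n=1}^k a_{k,n} t^n for k≥1. Then a_{k,1}=1, a_{k,2}=4^{k-1}-1 for k≥2, and the leading coefficient satisfies a_{k,k}=(2k-1)!! (double factorial). -/
open Polynomial

private lemma sum_pair (f : ℕ → ℕ) (n : ℕ) :
    ∑ i ∈ Finset.range (2 * n), f i = ∑ j ∈ Finset.range n, (f (2 * j) + f (2 * j + 1)) := by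
  induction n with
  | zero => simp
  | succ m ih =>
    have : 2 * (m + 1) = (2 * m) + 1 + 1 := by ring
    rw [this, Finset.sum_range_succ, Finset.sum_range_succ, ih, Finset.sum_range_succ]
    omega

private lemma even_choose_sum (m : ℕ) :
    ∑ j ∈ Finset.range (m + 2), Nat.choose (2 * m + 2) (2 * j) = 2 ^ (2 * m + 1) := by
  have h1 : ∑ j ∈ Finset.range (m + 2), Nat.choose (2 * m + 2) (2 * j)
      = (∑ j ∈ Finset.range (m + 1), Nat.choose (2 * m + 2) (2 * (j + 1))) + 1 := by
    rw [Finset.sum_range_succ' (fun j => Nat.choose (2 * m + 2) (2 * j)) (m + 1)]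
    simp
  have h2 : ∀ j, Nat.choose (2 * m + 2) (2 * (j + 1))
      = Nat.choose (2 * m + 1) (2 * j + 1) + Nat.choose (2 * m + 1) (2 * j + 1 + 1) := by
    intro j
    have : 2 * (j + 1) = (2 * j + 1) + 1 := by ring
    rw [this]
    have : 2 * m + 2 = (2 * m + 1) + 1 := by ring
    rw [this, Nat.choose_succ_succ']
  have h3 : ∑ j ∈ Finset.range (m + 1),
      (Nat.choose (2 * m + 1) (2 * j + 1) + Nat.choose (2 * m + 1) (2 * j + 1 + 1))
      = ∑ i ∈ Finset.range (2 * (m + 1)), Nat.choose (2 * m + 1) (i + 1) := by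
    rw [sum_pair (fun i => Nat.choose (2 * m + 1) (i + 1)) (m + 1)]
  have h4 : ∑ i ∈ Finset.range (2 * (m + 1)) , Nat.choose (2 * m + 1) (i + 1)
      = 2 ^ (2 * m + 1) - 1 := by
    have h5 : ∑ i ∈ Finset.range (2 * m + 2 + 1), Nat.choose (2 * m + 1) i = 2 ^ (2 * m + 1) := by
      rw [Finset.sum_range_succ, Nat.choose_eq_zero_of_lt (by omega), Nat.add_zero]
      exact Nat.sum_range_choose (2 * m + 1)
    rw [Finset.sum_range_succ' (fun i => Nat.choose (2 * m + 1) i) (2 * m + 2)] at h5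
    simp only [Nat.choose_zero_right] at h5
    rw [show 2 * (m + 1) = 2 * m + 2 from by ring]
    omega
  calc ∑ j ∈ Finset.range (m + 2), Nat.choose (2 * m + 2) (2 * j)
      = (∑ j ∈ Finset.range (m + 1), Nat.choose (2 * m + 2) (2 * (j + 1))) + 1 := h1
    _ = (∑ i ∈ Finset.range (2 * (m + 1)), Nat.choose (2 * m + 1) (i + 1)) + 1 := by
        rw [← h3]
        exact congrArg (· + 1) (Finset.sum_congr rfl (fun j _ => h2 j))
    _ = 2 ^ (2 * m + 1) := by
        rw [h4]
        have : 1 ≤ 2 ^ (2 * m + 1) := Nat.one_le_two_pow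
        omega

/-- For the polynomials `p_k` (with `p_k(t) = ∑_{n=1}^k a_{k,n} t^n`), one has
`a_{k,1} = 1`, `a_{k,2} = 4^{k-1} - 1` for `k ≥ 2`, and `a_{k,k} = (2k-1)!!`. -/
theorem stmt1 (p : ℕ → Polynomial ℝ)
    (hp0 : p 0 = 1)
    (hval : ∀ k, 1 ≤ k → (p k).eval 0 = 0)
    (hder : ∀ k, 1 ≤ k →
      derivative (p k) = ∑ j ∈ Finset.range k, (Nat.choose (2 * k) (2 * j) : ℝ) • p j) :
    (∀ k, 1 ≤ k → (p k).coeff 1 = 1) ∧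
    (∀ k, 2 ≤ k → (p k).coeff 2 = (4 : ℝ) ^ (k - 1) - 1) ∧
    (∀ k, 1 ≤ k → (p k).coeff k = (Nat.doubleFactorial (2 * k - 1) : ℝ)) := by
  -- key recursion for coefficients
  have hkey : ∀ k, 1 ≤ k → ∀ n : ℕ,
      (p k).coeff (n + 1) * (n + 1) =
        ∑ j ∈ Finset.range k, (Nat.choose (2 * k) (2 * j) : ℝ) * (p j).coeff n := by
    intro k hk n
    have h := congrArg (fun q => Polynomial.coeff q n) (hder k hk)
    simpa [Polynomial.coeff_derivative, Polynomial.finset_sum_coeff, Polynomial.coeff_smul,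
      smul_eq_mul] using h
  -- coeff 0 values
  have hc0 : ∀ j : ℕ, (p j).coeff 0 = if j = 0 then 1 else 0 := by
    intro j
    rcases Nat.eq_zero_or_pos j with rfl | hj
    · simp [hp0]
    · rw [if_neg (by omega), Polynomial.coeff_zero_eq_eval_zero]
      exact hval j hj
  -- vanishing above the degree
  have hvan : ∀ k, ∀ n, k < n → (p k).coeff n = 0 := by
    intro k
    induction k using Nat.strong_induction_on with
    | _ k ih =>
      intro n hn
      rcases Nat.eq_zero_or_pos k with rfl | hk
      · rcases Nat.exists_eq_succ_of_ne_zero (by omega : n ≠ 0) with ⟨m, rfl⟩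
        simp [hp0, Polynomial.coeff_one]
      · rcases Nat.exists_eq_succ_of_ne_zero (by omega : n ≠ 0) with ⟨m, rfl⟩
        have h := hkey k hk m
        have hz : ∀ j ∈ Finset.range k,
            (Nat.choose (2 * k) (2 * j) : ℝ) * (p j).coeff m = 0 := by
          intro j hj
          rw [Finset.mem_range] at hj
          rw [ih j hj m (by omega), mul_zero]
        rw [Finset.sum_eq_zero hz] at h
        have hm : ((m : ℝ) + 1) ≠ 0 := by positivity
        exact (mul_eq_zero.mp h).resolve_right hm
  -- part 1
  have part1 : ∀ k, 1 ≤ k → (p k).coeff 1 = 1 := by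
    intro k hk
    have h := hkey k hk 0
    rw [Finset.sum_eq_single_of_mem 0 (Finset.mem_range.mpr hk)
      (fun j _ hj => by rw [hc0 j, if_neg hj, mul_zero])] at h
    simpa [hc0] using h
  -- part 3
  have part3 : ∀ k, 1 ≤ k → (p k).coeff k = (Nat.doubleFactorial (2 * k - 1) : ℝ) := by
    intro k
    induction k with
    | zero => omega
    | succ k ihk =>
      intro _
      rcases Nat.eq_zero_or_pos k with rfl | hk
      · simpa [Nat.doubleFactorial] using part1 1 le_rfl
      · have h := hkey (k + 1) (by omega) k
        have hz : ∀ j ∈ Finset.range (k + 1), j ≠ k →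
            (Nat.choose (2 * (k + 1)) (2 * j) : ℝ) * (p j).coeff k = 0 := by
          intro j hj hjk
          rw [Finset.mem_range] at hj
          rw [hvan j k (by omega), mul_zero]
        rw [Finset.sum_eq_single_of_mem k (Finset.mem_range.mpr (by omega)) hz] at h
        rw [ihk hk] at h
        -- choose (2k+2) (2k) = (k+1)(2k+1)
        have hch : (Nat.choose (2 * (k + 1)) (2 * k)) = (k + 1) * (2 * k + 1) := by
          have h1 : 2 * (k + 1) - 2 * k = 2 := by omega
          rw [← Nat.choose_symm (by omega : 2 * k ≤ 2 * (k + 1)), h1, Nat.choose_two_right]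
          rw [show 2 * (k + 1) - 1 = 2 * k + 1 from by omega,
            show 2 * (k + 1) * (2 * k + 1) = 2 * ((k + 1) * (2 * k + 1)) from by ring]
          exact Nat.mul_div_cancel_left _ (by norm_num)
        have hdf : Nat.doubleFactorial (2 * (k + 1) - 1)
            = (2 * k + 1) * Nat.doubleFactorial (2 * k - 1) := by
          have h1 : 2 * (k + 1) - 1 = (2 * k - 1) + 2 := by omega
          rw [h1, Nat.doubleFactorial]
          congr 1
          omega
        rw [hch] at h
        rw [hdf]
        have hk1 : ((k : ℝ) + 1) ≠ 0 := by positivity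
        refine mul_right_cancel₀ hk1 ?_
        push_cast at h ⊢
        linear_combination h
  refine ⟨part1, ?_, part3⟩
  -- part 2
  intro k hk
  have h := hkey k (by omega) 1
  have hsplit : ∑ j ∈ Finset.range k, (Nat.choose (2 * k) (2 * j) : ℝ) * (p j).coeff 1
      = ∑ j ∈ Finset.range k, (if j = 0 then 0 else (Nat.choose (2 * k) (2 * j) : ℝ)) := by
    apply Finset.sum_congr rfl
    intro j hj
    rcases Nat.eq_zero_or_pos j with rfl | hjpos
    · simp [hp0, Polynomial.coeff_one]
    · rw [if_neg (by omega), part1 j hjpos, mul_one]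
  rw [hsplit] at h
  obtain ⟨m, rfl⟩ : ∃ m, k = m + 2 := ⟨k - 2, by omega⟩
  -- evaluate the binomial sum
  have hpeel : ∑ j ∈ Finset.range (m + 2),
      (if j = 0 then (0:ℝ) else (Nat.choose (2 * (m + 2)) (2 * j) : ℝ))
      = ∑ i ∈ Finset.range (m + 1), (Nat.choose (2 * (m + 2)) (2 * (i + 1)) : ℝ) := by
    rw [Finset.sum_range_succ'
      (fun j => (if j = 0 then (0:ℝ) else (Nat.choose (2 * (m + 2)) (2 * j) : ℝ))) (m + 1)]
    simp
  have htot := even_choose_sum (m + 1)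
  have h2eq : (2 : ℕ) * (m + 1) + 2 = 2 * (m + 2) := by ring
  rw [h2eq] at htot
  have hsum : ∑ j ∈ Finset.range (m + 3), (Nat.choose (2 * (m + 2)) (2 * j) : ℝ)
      = (2 : ℝ) ^ (2 * m + 3) := by
    rw [← Nat.cast_sum, htot]
    norm_num
    ring_nf
  rw [Finset.sum_range_succ, Finset.sum_range_succ'
    (fun j => (Nat.choose (2 * (m + 2)) (2 * j) : ℝ)) (m + 1)] at hsum
  simp only [Nat.mul_zero, Nat.choose_zero_right, Nat.choose_self, Nat.cast_one] at hsum
  -- so inner sum = 2^(2m+3) - 2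
  have hinner : ∑ i ∈ Finset.range (m + 1), (Nat.choose (2 * (m + 2)) (2 * (i + 1)) : ℝ)
      = (2 : ℝ) ^ (2 * m + 3) - 2 := by linarith [hsum]
  rw [hpeel, hinner] at h
  have h4 : (4 : ℝ) ^ (m + 2 - 1) = (2 : ℝ) ^ (2 * m + 2) := by
    have : (4 : ℝ) = 2 ^ 2 := by norm_num
    rw [this, ← pow_mul]
    congr 1
  rw [h4]
  have hp2 : (2 : ℝ) ^ (2 * m + 3) = 2 * 2 ^ (2 * m + 2) := by ring
  rw [hp2] at h
  norm_num at h
  linarith [h]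
end

section
/- For every k≥0 and every t∈ℂ, ∑_{n∈ℤ} n^{2k} I_n(t) = e^t p_k(t), where I_n is the modified Bessel function of the first kind of integer order n and p_k are the polynomials defined by p_0=1, p_k(0)=0, p_k' = ∑_{j=0}^{k-1} C(2k,2j) p_j. -/
open Polynomial Finset

/-- The modified Bessel function of the first kind of integer order `n`
(using `I_{-n} = I_n`). -/
noncomputable def besselI (n : ℤ) (t : ℂ) : ℂ :=
  ∑' m : ℕ, (t / 2) ^ (2 * m + n.natAbs) /
    ((m.factorial : ℂ) * Complex.Gamma ((m : ℂ) + (n.natAbs : ℂ) + 1))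

namespace BesselAux

lemma sum_range_two_mul (m : ℕ) (c : ℕ → ℂ) (h : ∀ i, Odd i → c i = 0) :
    ∑ i ∈ Finset.range (2 * m), c i = ∑ j ∈ Finset.range m, c (2 * j) := by
  induction m with
  | zero => simp
  | succ m ih =>
    have h2 : 2 * (m + 1) = (2 * m) + 1 + 1 := by ring
    rw [h2, Finset.sum_range_succ, Finset.sum_range_succ, ih, Finset.sum_range_succ,
      h (2 * m + 1) ⟨m, by ring⟩, add_zero]

lemma binom_even (k : ℕ) (n : ℂ) :
    (n + 1) ^ (2 * k) + (n - 1) ^ (2 * k) =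
      2 * ∑ j ∈ Finset.range (k + 1), (Nat.choose (2 * k) (2 * j) : ℂ) * n ^ (2 * j) := by
  have key : ∀ i ∈ Finset.range (2 * k + 1), ((-1 : ℂ)) ^ (2 * k - i) = (-1) ^ i := by
    intro i hi
    have hi' : i ≤ 2 * k := by simpa [Nat.lt_succ_iff] using hi
    rcases Nat.even_or_odd i with hp | hp
    · rw [hp.neg_one_pow, (by rw [Nat.even_sub hi']; simp [hp] : Even (2 * k - i)).neg_one_pow]
    · rw [hp.neg_one_pow, (by
        rw [Nat.odd_sub hi']; simp [hp, Nat.even_iff, Nat.odd_iff.mp hp] : Odd (2 * k - i)).neg_one_pow]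
  have h1 : (n + 1) ^ (2 * k) + (n - 1) ^ (2 * k)
      = ∑ i ∈ Finset.range (2 * k + 1), (Nat.choose (2 * k) i : ℂ) * n ^ i * (1 + (-1) ^ i) := by
    rw [add_pow, (by ring : n - 1 = n + (-1)), add_pow, ← Finset.sum_add_distrib]
    refine Finset.sum_congr rfl fun i hi => ?_
    rw [key i hi]
    ring
  have h2 : (n + 1) ^ (2 * k) + (n - 1) ^ (2 * k)
      = ∑ i ∈ Finset.range (2 * (k + 1)), (Nat.choose (2 * k) i : ℂ) * n ^ i * (1 + (-1) ^ i) := by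
    rw [h1, (by ring : 2 * (k + 1) = (2 * k + 1) + 1)]
    conv_rhs => rw [Finset.sum_range_succ]
    rw [Nat.choose_succ_self]
    simp
  rw [h2, sum_range_two_mul (k + 1) _ (fun i hi => by rw [hi.neg_one_pow]; ring),
    Finset.mul_sum]
  refine Finset.sum_congr rfl fun j _ => ?_
  have : (1 : ℂ) + (-1) ^ (2 * j) = 2 := by
    rw [(Even.neg_one_pow ⟨j, by ring⟩)]; norm_num
  rw [this]; ring

/-- auxiliary sum `SA k N = ∑_{a+b=N} (b-a)^{2k}/(a! b!)`. -/
noncomputable def SA (k N : ℕ) : ℂ :=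
  ∑ x ∈ Finset.HasAntidiagonal.antidiagonal N,
    ((x.2 : ℂ) - (x.1 : ℂ)) ^ (2 * k) / ((x.1.factorial : ℂ) * (x.2.factorial : ℂ))

noncomputable def A (k N : ℕ) : ℂ := SA k N / 2 ^ N

noncomputable def B (p : ℕ → Polynomial ℂ) (k N : ℕ) : ℂ :=
  ∑ x ∈ Finset.HasAntidiagonal.antidiagonal N, (p k).coeff x.1 / (x.2.factorial : ℂ)

lemma SA_rec (k N : ℕ) :
    ((N : ℂ) + 1) * SA k (N + 1) =
      ∑ x ∈ Finset.HasAntidiagonal.antidiagonal N,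
        ((((x.2 : ℂ) - x.1) - 1) ^ (2 * k) + (((x.2 : ℂ) - x.1) + 1) ^ (2 * k)) /
          ((x.1.factorial : ℂ) * (x.2.factorial : ℂ)) := by
  have hsplit : ((N : ℂ) + 1) * SA k (N + 1)
      = (∑ x ∈ Finset.HasAntidiagonal.antidiagonal (N + 1),
          (x.1 : ℂ) * (((x.2 : ℂ) - x.1) ^ (2 * k) / ((x.1.factorial : ℂ) * x.2.factorial)))
        + ∑ x ∈ Finset.HasAntidiagonal.antidiagonal (N + 1),
          (x.2 : ℂ) * (((x.2 : ℂ) - x.1) ^ (2 * k) / ((x.1.factorial : ℂ) * x.2.factorial)) := by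
    rw [SA, Finset.mul_sum, ← Finset.sum_add_distrib]
    refine Finset.sum_congr rfl fun x hx => ?_
    have hx' : x.1 + x.2 = N + 1 := Finset.HasAntidiagonal.mem_antidiagonal.mp hx
    have h3 : ((x.1 : ℂ) + x.2) = (N : ℂ) + 1 := by exact_mod_cast congrArg (Nat.cast : ℕ → ℂ) hx'
    rw [← h3]; ring
  rw [hsplit, Finset.Nat.sum_antidiagonal_succ, Finset.Nat.sum_antidiagonal_succ']
  simp only [Nat.cast_zero, zero_mul, zero_add, Nat.cast_ofNat]
  rw [← Finset.sum_add_distrib]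
  refine Finset.sum_congr rfl fun x _ => ?_
  have hfa : ((x.1 + 1).factorial : ℂ) = ((x.1 : ℂ) + 1) * x.1.factorial := by
    push_cast [Nat.factorial_succ]; ring
  have hfb : ((x.2 + 1).factorial : ℂ) = ((x.2 : ℂ) + 1) * x.2.factorial := by
    push_cast [Nat.factorial_succ]; ring
  have ha0 : ((x.1 : ℂ) + 1) ≠ 0 := by
    have := Nat.cast_ne_zero (R := ℂ) (n := x.1 + 1) |>.mpr (Nat.succ_ne_zero x.1)
    push_cast at this; exact this
  have hb0 : ((x.2 : ℂ) + 1) ≠ 0 := by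
    have := Nat.cast_ne_zero (R := ℂ) (n := x.2 + 1) |>.mpr (Nat.succ_ne_zero x.2)
    push_cast at this; exact this
  have hfa0 : (x.1.factorial : ℂ) ≠ 0 := by
    exact_mod_cast Nat.cast_ne_zero.mpr x.1.factorial_ne_zero
  have hfb0 : (x.2.factorial : ℂ) ≠ 0 := by
    exact_mod_cast Nat.cast_ne_zero.mpr x.2.factorial_ne_zero
  push_cast [hfa, hfb]
  field_simp
  ring


lemma SA_rec' (k N : ℕ) :
    ((N : ℂ) + 1) * SA k (N + 1) =
      2 * ∑ j ∈ Finset.range (k + 1), (Nat.choose (2 * k) (2 * j) : ℂ) * SA j N := by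
  rw [SA_rec]
  have h1 : ∀ x ∈ Finset.HasAntidiagonal.antidiagonal N,
      ((((x.2 : ℂ) - x.1) - 1) ^ (2 * k) + (((x.2 : ℂ) - x.1) + 1) ^ (2 * k)) /
          ((x.1.factorial : ℂ) * (x.2.factorial : ℂ))
        = ∑ j ∈ Finset.range (k + 1), 2 * ((Nat.choose (2 * k) (2 * j) : ℂ) *
            (((x.2 : ℂ) - x.1) ^ (2 * j) / ((x.1.factorial : ℂ) * (x.2.factorial : ℂ)))) := by
    intro x _
    rw [add_comm ((((x.2 : ℂ) - x.1) - 1) ^ (2 * k)), binom_even k ((x.2 : ℂ) - x.1),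
      Finset.mul_sum, Finset.sum_div]
    exact Finset.sum_congr rfl fun j _ => by ring
  rw [Finset.sum_congr rfl h1, Finset.sum_comm]
  rw [Finset.mul_sum]
  refine Finset.sum_congr rfl fun j _ => ?_
  rw [SA, Finset.mul_sum, Finset.mul_sum]
  try exact Finset.sum_congr rfl fun x _ => by ring

lemma A_rec (k N : ℕ) :
    ((N : ℂ) + 1) * A k (N + 1) =
      ∑ j ∈ Finset.range (k + 1), (Nat.choose (2 * k) (2 * j) : ℂ) * A j N := by
  have h2 : ((2 : ℂ)) ^ N ≠ 0 := pow_ne_zero _ two_ne_zero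
  rw [A, pow_succ, ← mul_div_assoc, SA_rec']
  rw [(by ring : 2 * (∑ j ∈ Finset.range (k + 1), (Nat.choose (2 * k) (2 * j) : ℂ) * SA j N)
      = (∑ j ∈ Finset.range (k + 1), (Nat.choose (2 * k) (2 * j) : ℂ) * SA j N) * 2)]
  rw [mul_div_mul_right _ _ (two_ne_zero), Finset.sum_div]
  exact Finset.sum_congr rfl fun j _ => by rw [A, mul_div_assoc]

lemma B_rec (p : ℕ → Polynomial ℂ)
    (hder' : ∀ k, derivative (p k) =
      ∑ j ∈ Finset.range k, (Nat.choose (2 * k) (2 * j) : ℂ) • p j) (k N : ℕ) :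
    ((N : ℂ) + 1) * B p k (N + 1) =
      ∑ j ∈ Finset.range (k + 1), (Nat.choose (2 * k) (2 * j) : ℂ) * B p j N := by
  have hsplit : ((N : ℂ) + 1) * B p k (N + 1)
      = (∑ x ∈ Finset.HasAntidiagonal.antidiagonal (N + 1), (x.1 : ℂ) * ((p k).coeff x.1 / (x.2.factorial : ℂ)))
        + ∑ x ∈ Finset.HasAntidiagonal.antidiagonal (N + 1), (x.2 : ℂ) * ((p k).coeff x.1 / (x.2.factorial : ℂ)) := by
    rw [B, Finset.mul_sum, ← Finset.sum_add_distrib]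
    refine Finset.sum_congr rfl fun x hx => ?_
    have hx' : x.1 + x.2 = N + 1 := Finset.HasAntidiagonal.mem_antidiagonal.mp hx
    have h3 : ((x.1 : ℂ) + x.2) = (N : ℂ) + 1 := by exact_mod_cast congrArg (Nat.cast : ℕ → ℂ) hx'
    rw [← h3]; ring
  have hB2 : ∑ x ∈ Finset.HasAntidiagonal.antidiagonal (N + 1), (x.2 : ℂ) * ((p k).coeff x.1 / (x.2.factorial : ℂ))
      = B p k N := by
    rw [Finset.Nat.sum_antidiagonal_succ' (f := fun x =>
      (x.2 : ℂ) * ((p k).coeff x.1 / (x.2.factorial : ℂ)))]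
    simp only [Nat.cast_zero, zero_mul, zero_add]
    refine Finset.sum_congr rfl fun x _ => ?_
    have hfb : ((x.2 + 1).factorial : ℂ) = ((x.2 : ℂ) + 1) * x.2.factorial := by
      push_cast [Nat.factorial_succ]; ring
    have hb0 : ((x.2 : ℂ) + 1) ≠ 0 := by
      have := Nat.cast_ne_zero (R := ℂ) (n := x.2 + 1) |>.mpr (Nat.succ_ne_zero x.2)
      push_cast at this; exact this
    have hfb0 : (x.2.factorial : ℂ) ≠ 0 := by
      exact_mod_cast Nat.cast_ne_zero.mpr x.2.factorial_ne_zero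
    push_cast [hfb]
    field_simp
  have hB1 : ∑ x ∈ Finset.HasAntidiagonal.antidiagonal (N + 1), (x.1 : ℂ) * ((p k).coeff x.1 / (x.2.factorial : ℂ))
      = ∑ j ∈ Finset.range k, (Nat.choose (2 * k) (2 * j) : ℂ) * B p j N := by
    rw [Finset.Nat.sum_antidiagonal_succ (f := fun x =>
      (x.1 : ℂ) * ((p k).coeff x.1 / (x.2.factorial : ℂ)))]
    simp only [Nat.cast_zero, zero_mul, zero_add]
    have h4 : ∀ x ∈ Finset.HasAntidiagonal.antidiagonal N,
        ((x.1 : ℂ) + 1) * ((p k).coeff (x.1 + 1) / (x.2.factorial : ℂ))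
          = ∑ j ∈ Finset.range k, (Nat.choose (2 * k) (2 * j) : ℂ) *
              ((p j).coeff x.1 / (x.2.factorial : ℂ)) := by
      intro x _
      have hd : (derivative (p k)).coeff x.1 = (p k).coeff (x.1 + 1) * ((x.1 : ℂ) + 1) := by
        rw [coeff_derivative]; try (push_cast; ring)
      have hd2 : (derivative (p k)).coeff x.1
          = ∑ j ∈ Finset.range k, (Nat.choose (2 * k) (2 * j) : ℂ) * (p j).coeff x.1 := by
        rw [hder' k, finset_sum_coeff]
        exact Finset.sum_congr rfl fun j _ => by rw [coeff_smul, smul_eq_mul]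
      calc ((x.1 : ℂ) + 1) * ((p k).coeff (x.1 + 1) / (x.2.factorial : ℂ))
          = (derivative (p k)).coeff x.1 / (x.2.factorial : ℂ) := by rw [hd]; ring
        _ = _ := by rw [hd2, Finset.sum_div]
                    exact Finset.sum_congr rfl fun j _ => by ring
    push_cast
    rw [Finset.sum_congr rfl h4, Finset.sum_comm]
    refine Finset.sum_congr rfl fun j _ => ?_
    rw [B, Finset.mul_sum]
  rw [hsplit, hB1, hB2, Finset.sum_range_succ, Nat.choose_self]
  push_cast
  ring

lemma A_eq_B (p : ℕ → Polynomial ℂ) (hp0 : p 0 = 1)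
    (hval : ∀ k, 1 ≤ k → (p k).eval 0 = 0)
    (hder : ∀ k, 1 ≤ k →
      derivative (p k) = ∑ j ∈ Finset.range k, (Nat.choose (2 * k) (2 * j) : ℂ) • p j) :
    ∀ k N, A k N = B p k N := by
  have hder' : ∀ k, derivative (p k) =
      ∑ j ∈ Finset.range k, (Nat.choose (2 * k) (2 * j) : ℂ) • p j := by
    intro k
    rcases Nat.eq_zero_or_pos k with rfl | hk
    · simp [hp0]
    · exact hder k hk
  intro k
  induction k using Nat.strong_induction_on with
  | _ k ih =>
    intro N
    induction N with
    | zero =>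
      rcases Nat.eq_zero_or_pos k with rfl | hk
      · simp [A, SA, B, hp0]
      · have hA : A k 0 = 0 := by
          simp [A, SA, zero_pow (by omega : 2 * k ≠ 0)]
        have hB : B p k 0 = 0 := by
          simp only [B, Finset.Nat.antidiagonal_zero, Finset.sum_singleton, Nat.factorial_zero,
            Nat.cast_one, div_one]
          rw [Polynomial.coeff_zero_eq_eval_zero]
          exact hval k hk
        rw [hA, hB]
    | succ N ihN =>
      have hA := A_rec k N
      have hB := B_rec p hder' k N
      have hsum : ∑ j ∈ Finset.range (k + 1), (Nat.choose (2 * k) (2 * j) : ℂ) * A j N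
          = ∑ j ∈ Finset.range (k + 1), (Nat.choose (2 * k) (2 * j) : ℂ) * B p j N := by
        refine Finset.sum_congr rfl fun j hj => ?_
        rcases Nat.lt_succ_iff_lt_or_eq.mp (Finset.mem_range.mp hj) with h | rfl
        · rw [ih j h]
        · rw [ihN]
      have hne : ((N : ℂ) + 1) ≠ 0 := by
        have := Nat.cast_ne_zero (R := ℂ) (n := N + 1) |>.mpr (Nat.succ_ne_zero N)
        push_cast at this; exact this
      exact mul_left_cancel₀ hne (by rw [hA, hB, hsum])


lemma summable_aux (j : ℕ) (r : ℝ) (hr : 0 ≤ r) :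
    Summable (fun n : ℕ => ((n : ℝ) + 1) ^ j * r ^ n / n.factorial) := by
  obtain ⟨C, hC⟩ : ∃ C, ∀ n : ℕ, (2 * r) ^ n / n.factorial ≤ C := by
    obtain ⟨C, hC⟩ := (Real.summable_pow_div_factorial (2 * r)).tendsto_atTop_zero.bddAbove_range
    exact ⟨C, fun n => hC ⟨n, rfl⟩⟩
  have hgeo : Summable (fun n : ℕ => ((n : ℝ) + 1) ^ j * (1 / 2 : ℝ) ^ n) := by
    have h1 : Summable (fun n : ℕ => (n : ℝ) ^ j * (1 / 2 : ℝ) ^ n) :=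
      summable_pow_mul_geometric_of_norm_lt_one j (by rw [Real.norm_eq_abs, abs_of_pos] <;> norm_num)
    have h2 := (summable_nat_add_iff 1).mpr h1
    have h3 := h2.mul_left (2 : ℝ)
    refine h3.congr fun n => ?_
    push_cast
    rw [pow_succ]
    ring
  refine Summable.of_nonneg_of_le (fun n => div_nonneg (mul_nonneg (by positivity) (pow_nonneg hr n)) (Nat.cast_nonneg _)) (fun n => ?_) (hgeo.mul_left C)
  have key : ((n : ℝ) + 1) ^ j * r ^ n / n.factorial
      = ((2 * r) ^ n / n.factorial) * (((n : ℝ) + 1) ^ j * (1 / 2 : ℝ) ^ n) := by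
    rw [mul_pow]
    have : (n.factorial : ℝ) ≠ 0 := Nat.cast_ne_zero.mpr n.factorial_ne_zero
    field_simp
    ring
    rw [mul_assoc, ← mul_pow]; norm_num
  rw [key]
  exact mul_le_mul_of_nonneg_right (hC n) (by positivity)

/-- the reindexing equivalence -/
def EE : ℕ × ℕ ≃ ℤ × ℕ where
  toFun x := ((x.2 : ℤ) - (x.1 : ℤ), min x.1 x.2)
  invFun q := (q.2 + (-q.1).toNat, q.2 + q.1.toNat)
  left_inv := by rintro ⟨a, b⟩; simp only [Prod.mk.injEq]; constructor <;> omega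
  right_inv := by rintro ⟨n, m⟩; simp only [Prod.mk.injEq]; constructor <;> omega

noncomputable def Fk (k : ℕ) (t : ℂ) (x : ℕ × ℕ) : ℂ :=
  ((x.2 : ℂ) - x.1) ^ (2 * k) * (t / 2) ^ (x.1 + x.2) /
    ((x.1.factorial : ℂ) * (x.2.factorial : ℂ))

noncomputable def fk (k : ℕ) (t : ℂ) (q : ℤ × ℕ) : ℂ :=
  (q.1 : ℂ) ^ (2 * k) * ((t / 2) ^ (2 * q.2 + q.1.natAbs) /
    ((q.2.factorial : ℂ) * (((q.2 + q.1.natAbs).factorial : ℕ) : ℂ)))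

lemma fk_EE (k : ℕ) (t : ℂ) (x : ℕ × ℕ) : fk k t (EE x) = Fk k t x := by
  obtain ⟨a, b⟩ := x
  simp only [fk, Fk, EE, Equiv.coe_fn_mk]
  have hpow : ((((b : ℤ) - a) : ℤ) : ℂ) ^ (2 * k) = ((b : ℂ) - a) ^ (2 * k) := by
    push_cast; ring
  have hmin : 2 * min a b + ((b : ℤ) - a).natAbs = a + b := by omega
  have hfact : (min a b).factorial * (min a b + ((b : ℤ) - a).natAbs).factorial
      = a.factorial * b.factorial := by
    rcases le_total a b with h | h
    · rw [min_eq_left h, (by omega : a + ((b : ℤ) - a).natAbs = b)]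
    · rw [min_eq_right h, (by omega : b + ((b : ℤ) - a).natAbs = a), mul_comm]
  have hfactC : ((min a b).factorial : ℂ) * (((min a b + ((b : ℤ) - a).natAbs).factorial : ℕ) : ℂ)
      = (a.factorial : ℂ) * (b.factorial : ℂ) := by
    have := congrArg (Nat.cast : ℕ → ℂ) hfact
    push_cast at this
    exact this
  rw [hpow, hmin, hfactC, mul_div_assoc]

lemma Fk_le (k : ℕ) (t : ℂ) (x : ℕ × ℕ) :
    ‖Fk k t x‖ ≤ (((x.1 : ℝ) + 1) ^ (2 * k) * ‖t / 2‖ ^ x.1 / x.1.factorial) *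
      (((x.2 : ℝ) + 1) ^ (2 * k) * ‖t / 2‖ ^ x.2 / x.2.factorial) := by
  obtain ⟨a, b⟩ := x
  have hnorm : ‖Fk k t (a, b)‖
      = ‖(b : ℂ) - a‖ ^ (2 * k) * (‖t / 2‖ ^ a * ‖t / 2‖ ^ b) /
        ((a.factorial : ℝ) * (b.factorial : ℝ)) := by
    rw [Fk, norm_div, norm_mul, norm_pow, norm_pow, norm_mul, Complex.norm_natCast,
      Complex.norm_natCast, pow_add]
  have hab : ‖(b : ℂ) - a‖ ≤ ((a : ℝ) + 1) * ((b : ℝ) + 1) := by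
    refine le_trans (norm_sub_le _ _) ?_
    rw [Complex.norm_natCast, Complex.norm_natCast]
    nlinarith [Nat.cast_nonneg (α := ℝ) a, Nat.cast_nonneg (α := ℝ) b]
  have hfa : (0 : ℝ) < (a.factorial : ℝ) := by exact_mod_cast a.factorial_pos
  have hfb : (0 : ℝ) < (b.factorial : ℝ) := by exact_mod_cast b.factorial_pos
  calc ‖Fk k t (a, b)‖
      = ‖(b : ℂ) - a‖ ^ (2 * k) * (‖t / 2‖ ^ a * ‖t / 2‖ ^ b) /
        ((a.factorial : ℝ) * (b.factorial : ℝ)) := hnorm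
    _ ≤ (((a : ℝ) + 1) * ((b : ℝ) + 1)) ^ (2 * k) * (‖t / 2‖ ^ a * ‖t / 2‖ ^ b) /
        ((a.factorial : ℝ) * (b.factorial : ℝ)) := by
        gcongr
    _ = _ := by rw [mul_pow]; field_simp

lemma Fk_summable (k : ℕ) (t : ℂ) : Summable (Fk k t) := by
  have hg := summable_aux (2 * k) ‖t / 2‖ (norm_nonneg _)
  refine Summable.of_norm (Summable.of_nonneg_of_le (fun x => norm_nonneg _) (Fk_le k t) ?_)
  exact hg.mul_of_nonneg hg (fun n => by positivity) (fun n => by positivity)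

lemma fk_summable (k : ℕ) (t : ℂ) : Summable (fk k t) := by
  rw [← Equiv.summable_iff EE]
  exact (Fk_summable k t).congr fun x => (fk_EE k t x).symm

end BesselAux

open BesselAux in
/-- Even moments of the modified Bessel functions: `∑_{n∈ℤ} n^{2k} I_n(t) = e^t p_k(t)`. -/
theorem stmt2 (p : ℕ → Polynomial ℂ)
    (hp0 : p 0 = 1)
    (hval : ∀ k, 1 ≤ k → (p k).eval 0 = 0)
    (hder : ∀ k, 1 ≤ k →
      derivative (p k) = ∑ j ∈ Finset.range k, (Nat.choose (2 * k) (2 * j) : ℂ) • p j)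
    (k : ℕ) (t : ℂ) :
    ∑' n : ℤ, (n : ℂ) ^ (2 * k) * besselI n t = Complex.exp t * (p k).eval t := by
  have hf : Summable (fk k t) := fk_summable k t
  have hF : Summable (Fk k t) := Fk_summable k t
  have hGamma : ∀ n : ℤ, (n : ℂ) ^ (2 * k) * besselI n t = ∑' m : ℕ, fk k t (n, m) := by
    intro n
    rw [besselI, ← tsum_mul_left]
    refine tsum_congr fun m => ?_
    have h1 : (m : ℂ) + (n.natAbs : ℂ) + 1 = ((m + n.natAbs : ℕ) : ℂ) + 1 := by
      push_cast; ring
    rw [h1, Complex.Gamma_nat_eq_factorial]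
    rfl
  have hLHS : ∑' n : ℤ, (n : ℂ) ^ (2 * k) * besselI n t
      = ∑' N : ℕ, t ^ N * A k N := by
    calc ∑' n : ℤ, (n : ℂ) ^ (2 * k) * besselI n t
        = ∑' (n : ℤ) (m : ℕ), fk k t (n, m) := tsum_congr hGamma
      _ = ∑' q : ℤ × ℕ, fk k t q := (Summable.tsum_prod' hf hf.prod_factor).symm
      _ = ∑' x : ℕ × ℕ, Fk k t x := by
          rw [← Equiv.tsum_eq EE (fk k t)]
          exact tsum_congr (fk_EE k t)
      _ = ∑' N : ℕ, ∑ x ∈ Finset.HasAntidiagonal.antidiagonal N, Fk k t x := by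
          conv_rhs => congr; ext N; rw [← Finset.sum_finset_coe, ← tsum_fintype (L := SummationFilter.unconditional _)]
          rw [← Finset.HasAntidiagonal.sigmaAntidiagonalEquivProd.tsum_eq (Fk k t)]
          exact Summable.tsum_sigma' (fun n => (hasSum_fintype _).summable)
            (Finset.HasAntidiagonal.sigmaAntidiagonalEquivProd.summable_iff.mpr hF)
      _ = ∑' N : ℕ, t ^ N * A k N := by
          refine tsum_congr fun N => ?_
          calc ∑ x ∈ Finset.HasAntidiagonal.antidiagonal N, Fk k t x
              = ∑ x ∈ Finset.HasAntidiagonal.antidiagonal N,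
                  (t / 2) ^ N * (((x.2 : ℂ) - x.1) ^ (2 * k) /
                    ((x.1.factorial : ℂ) * (x.2.factorial : ℂ))) := by
                refine Finset.sum_congr rfl fun x hx => ?_
                rw [Fk, (Finset.HasAntidiagonal.mem_antidiagonal.mp hx : x.1 + x.2 = N)]
                ring
            _ = (t / 2) ^ N * SA k N := by rw [← Finset.mul_sum, SA]
            _ = t ^ N * A k N := by rw [A, div_pow]; ring
  have hpoly0 : ∀ i ∉ Finset.range ((p k).natDegree + 1), (p k).coeff i * t ^ i = 0 := by
    intro i hi
    rw [Polynomial.coeff_eq_zero_of_natDegree_lt (by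
      have := Finset.mem_range.not.mp hi; omega), zero_mul]
  have hpsum : Summable (fun i : ℕ => ‖(p k).coeff i * t ^ i‖) := by
    refine summable_of_ne_finset_zero (s := Finset.range ((p k).natDegree + 1)) fun i hi => ?_
    rw [hpoly0 i hi, norm_zero]
  have hexp_norm : Summable (fun j : ℕ => ‖t ^ j / (j.factorial : ℂ)‖) := by
    refine (Real.summable_pow_div_factorial ‖t‖).congr fun j => ?_
    rw [norm_div, norm_pow, Complex.norm_natCast]
  have hexp : Complex.exp t = ∑' j : ℕ, t ^ j / (j.factorial : ℂ) := by
    rw [Complex.exp_eq_exp_ℂ, NormedSpace.exp_eq_tsum_div]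
  have hval_eq : (p k).eval t = ∑' i : ℕ, (p k).coeff i * t ^ i := by
    rw [tsum_eq_sum hpoly0]
    exact Polynomial.eval_eq_sum_range t
  have hRHS : Complex.exp t * (p k).eval t = ∑' N : ℕ, t ^ N * B p k N := by
    calc Complex.exp t * (p k).eval t
        = (∑' i : ℕ, (p k).coeff i * t ^ i) * ∑' j : ℕ, t ^ j / (j.factorial : ℂ) := by
          rw [hexp, hval_eq]; ring
      _ = ∑' N : ℕ, ∑ x ∈ Finset.HasAntidiagonal.antidiagonal N,
            ((p k).coeff x.1 * t ^ x.1) * (t ^ x.2 / (x.2.factorial : ℂ)) :=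
          tsum_mul_tsum_eq_tsum_sum_antidiagonal_of_summable_norm hpsum hexp_norm
      _ = ∑' N : ℕ, t ^ N * B p k N := by
          refine tsum_congr fun N => ?_
          rw [B, Finset.mul_sum]
          refine Finset.sum_congr rfl fun x hx => ?_
          rw [← (Finset.HasAntidiagonal.mem_antidiagonal.mp hx : x.1 + x.2 = N), pow_add]
          ring
  rw [hLHS, hRHS]
  exact tsum_congr fun N => by rw [A_eq_B p hp0 hval hder k N]
end
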